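/- With the primal–dual proximal pair Φ_λ, Ψ_λ (Φ_λ(u) = ω(Au) + (1/(2λ))‖u−y‖², Ψ_λ(v) = (1/(2λ))‖λAᵀv−y‖² + ω*(v) − (1/(2λ))‖y‖²), where ω is globally K_ω-Lipschitz, let v̄ minimize Ψ_λ, z̄ = y − λAᵀv̄, and for any v set z = y − λAᵀv and Δ = Ψ_λ(v) − Ψ_λ(v̄). Then Φ_λ(z) − Φ_λ(z̄) ≤ √Δ · ( 2√(2λ) K_ω ‖A‖ + √Δ ). -/

import Mathlib

open scoped RealInnerProductSpace

/-- Fenchel conjugate of an extended-real-valued function on ℝᵐ. -/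
noncomputable def fenchelConj {m : ℕ} (g : EuclideanSpace ℝ (Fin m) → EReal)
    (y : EuclideanSpace ℝ (Fin m)) : EReal :=
  ⨆ x, ((⟪y, x⟫ : ℝ) : EReal) - g x


lemma affine_minorant {m : ℕ} (omega : EuclideanSpace ℝ (Fin m) → ℝ)
    (hconv : ConvexOn ℝ Set.univ omega) (hcont : Continuous omega) :
    ∃ (g : EuclideanSpace ℝ (Fin m)) (c : ℝ), ∀ x, ⟪g, x⟫ - omega x ≤ c := by
  set S : Set (EuclideanSpace ℝ (Fin m) × ℝ) := {p | omega p.1 < p.2} with hS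
  have hSopen : IsOpen S := by
    have h0 : S = (fun p : EuclideanSpace ℝ (Fin m) × ℝ => p.2 - omega p.1) ⁻¹' Set.Ioi 0 := by
      ext p; simp [hS, sub_pos]
    rw [h0]
    exact IsOpen.preimage (continuous_snd.sub (hcont.comp continuous_fst)) isOpen_Ioi
  have hSconv : Convex ℝ S := by
    rintro ⟨p1, p2⟩ hp ⟨q1, q2⟩ hq a b ha hb hab
    simp only [hS, Set.mem_setOf_eq] at hp hq ⊢
    have h1 : omega (a • p1 + b • q1) ≤ a * omega p1 + b * omega q1 := by
      simpa [smul_eq_mul] using hconv.2 (Set.mem_univ p1) (Set.mem_univ q1) ha hb hab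
    have h5 : a * omega p1 + b * omega q1 < a * p2 + b * q2 := by
      rcases eq_or_lt_of_le ha with rfl | ha'
      · simp only [zero_mul, zero_add]
        have hb1 : b = 1 := by linarith
        subst hb1; simpa using hq
      · have h2 : a * omega p1 < a * p2 := (mul_lt_mul_iff_right₀ ha').2 hp
        have h3 : b * omega q1 ≤ b * q2 := mul_le_mul_of_nonneg_left hq.le hb
        linarith
    calc omega (a • p1 + b • q1) ≤ a * omega p1 + b * omega q1 := h1
      _ < (a • p2 + b • q2 : ℝ) := by simpa [smul_eq_mul] using h5
  have hpt : ((0 : EuclideanSpace ℝ (Fin m)), omega 0 - 1) ∉ S := by simp [hS]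
  obtain ⟨f, hf⟩ := geometric_hahn_banach_point_open hSconv hSopen hpt
  set c₁ : ℝ := f (0, 1) with hc₁
  have hflin : ∀ (x : EuclideanSpace ℝ (Fin m)) (r : ℝ), f (x, r) = f (x, 0) + r * c₁ := by
    intro x r
    have h6 : (x, r) = (x, (0:ℝ)) + r • ((0:EuclideanSpace ℝ (Fin m)), (1:ℝ)) := by
      simp [Prod.ext_iff]
    rw [h6, map_add, map_smul, smul_eq_mul, hc₁]
  set L : ℝ := f (0, omega 0 - 1) with hL
  have hc₁pos : 0 < c₁ := by
    have h1 : ((0:EuclideanSpace ℝ (Fin m)), omega 0 + 1) ∈ S := by simp [hS]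
    have h7 := hf _ h1
    rw [hflin 0 (omega 0 + 1)] at h7
    rw [hL, hflin 0 (omega 0 - 1)] at h7
    nlinarith
  have key : ∀ x : EuclideanSpace ℝ (Fin m), L ≤ f (x, 0) + omega x * c₁ := by
    intro x
    have h2 : ∀ ε : ℝ, 0 < ε → L ≤ f (x, 0) + omega x * c₁ + ε := by
      intro ε hε
      have hmem : (x, omega x + ε / c₁) ∈ S := by
        simp only [hS, Set.mem_setOf_eq, lt_add_iff_pos_right]
        positivity
      have h8 := hf _ hmem
      rw [hflin] at h8
      have hc : (ε / c₁) * c₁ = ε := div_mul_cancel₀ _ hc₁pos.ne'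
      nlinarith
    exact le_of_forall_pos_le_add h2
  set g' : EuclideanSpace ℝ (Fin m) →L[ℝ] ℝ :=
    (-(1/c₁)) • (f.comp (ContinuousLinearMap.inl ℝ _ ℝ)) with hg'
  refine ⟨(InnerProductSpace.toDual ℝ _).symm g', -L / c₁, fun x => ?_⟩
  have hgx : ⟪(InnerProductSpace.toDual ℝ _).symm g', x⟫ = g' x :=
    InnerProductSpace.toDual_symm_apply
  rw [hgx, hg']
  simp only [ContinuousLinearMap.smul_apply, ContinuousLinearMap.coe_comp',
    Function.comp_apply, ContinuousLinearMap.inl_apply, smul_eq_mul]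
  have h9 := key x
  have h3 : -(1/c₁) * f (x, 0) ≤ -(1/c₁) * (L - omega x * c₁) := by
    apply mul_le_mul_of_nonpos_left _ (by rw [neg_nonpos]; positivity)
    linarith
  have h4 : -(1/c₁) * (L - omega x * c₁) = -L/c₁ + omega x := by
    field_simp; ring
  linarith
lemma fenchelConj_term {m : ℕ} (omega : EuclideanSpace ℝ (Fin m) → ℝ)
    (w x : EuclideanSpace ℝ (Fin m)) :
    ((⟪w, x⟫ : ℝ) : EReal) - ((omega x : ℝ) : EReal) = ((⟪w, x⟫ - omega x : ℝ) : EReal) :=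
  (EReal.coe_sub _ _).symm

lemma fenchelConj_le_iff {m : ℕ} (omega : EuclideanSpace ℝ (Fin m) → ℝ)
    (w : EuclideanSpace ℝ (Fin m)) (r : EReal) :
    fenchelConj (fun z => ((omega z : ℝ) : EReal)) w ≤ r ↔
      ∀ x, ((⟪w, x⟫ - omega x : ℝ) : EReal) ≤ r := by
  rw [fenchelConj, iSup_le_iff]
  exact forall_congr' fun x => by rw [fenchelConj_term]

lemma le_fenchelConj {m : ℕ} (omega : EuclideanSpace ℝ (Fin m) → ℝ)
    (w x : EuclideanSpace ℝ (Fin m)) :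
    ((⟪w, x⟫ - omega x : ℝ) : EReal) ≤ fenchelConj (fun z => ((omega z : ℝ) : EReal)) w := by
  rw [← fenchelConj_term]
  exact le_iSup (fun x => ((⟪w, x⟫ : ℝ) : EReal) - ((omega x : ℝ) : EReal)) x

lemma fenchelConj_ne_bot {m : ℕ} (omega : EuclideanSpace ℝ (Fin m) → ℝ)
    (w : EuclideanSpace ℝ (Fin m)) :
    fenchelConj (fun z => ((omega z : ℝ) : EReal)) w ≠ ⊥ := by
  intro h
  have h1 := le_fenchelConj omega w 0
  rw [h] at h1
  simp only [inner_zero_right, zero_sub, le_bot_iff] at h1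
  exact EReal.coe_ne_bot _ h1

lemma norm_le_of_fenchelConj_ne_top {m : ℕ} (omega : EuclideanSpace ℝ (Fin m) → ℝ)
    (K : ℝ) (hK : 0 ≤ K) (hlip : ∀ a b, |omega a - omega b| ≤ K * ‖a - b‖)
    (w : EuclideanSpace ℝ (Fin m))
    (hw : fenchelConj (fun z => ((omega z : ℝ) : EReal)) w ≠ ⊤) : ‖w‖ ≤ K := by
  by_contra hKw
  push_neg at hKw
  have hwpos : 0 < ‖w‖ := lt_of_le_of_lt hK hKw
  have hP : 0 < ‖w‖ * (‖w‖ - K) := mul_pos hwpos (by linarith)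
  have hforall : ∀ M : ℝ, (M : EReal) ≤ fenchelConj (fun z => ((omega z : ℝ) : EReal)) w := by
    intro M
    set t : ℝ := max 0 ((M + omega 0) / (‖w‖ * (‖w‖ - K))) with ht
    have ht0 : 0 ≤ t := le_max_left _ _
    have htP : M + omega 0 ≤ t * (‖w‖ * (‖w‖ - K)) := by
      rcases le_or_gt (M + omega 0) 0 with h | h
      · nlinarith
      · have : t = (M + omega 0) / (‖w‖ * (‖w‖ - K)) := by
          rw [ht, max_eq_right]; positivity
        rw [this, div_mul_cancel₀ _ hP.ne']
    have hlb : M ≤ ⟪w, t • w⟫ - omega (t • w) := by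
      have h1 : ⟪w, t • w⟫ = t * (‖w‖ * ‖w‖) := by
        rw [real_inner_smul_right, real_inner_self_eq_norm_mul_norm]
      have h2 : omega (t • w) ≤ omega 0 + K * (t * ‖w‖) := by
        have := hlip (t • w) 0
        rw [sub_zero, norm_smul, Real.norm_eq_abs, abs_of_nonneg ht0] at this
        have := abs_le.1 this
        linarith [this.2]
      rw [h1]
      nlinarith
    calc (M : EReal) ≤ ((⟪w, t • w⟫ - omega (t • w) : ℝ) : EReal) := EReal.coe_le_coe_iff.2 hlb
      _ ≤ _ := le_fenchelConj omega w (t • w)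
  have hbot := fenchelConj_ne_bot omega w
  have hco := EReal.coe_toReal hw hbot
  set r := (fenchelConj (fun z => ((omega z : ℝ) : EReal)) w).toReal
  have := hforall (r + 1)
  rw [← hco] at this
  have := EReal.coe_le_coe_iff.1 this
  linarith

lemma quad_interp {n : ℕ} (u d : EuclideanSpace ℝ (Fin n)) (t : ℝ) :
    ‖u + t • d‖^2 = (1-t)*‖u‖^2 + t*‖u + d‖^2 - t*(1-t)*‖d‖^2 := by
  have e1 : ‖u + t • d‖^2 = ‖u‖^2 + 2*(t*⟪u,d⟫) + t^2*‖d‖^2 := by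
    rw [norm_add_sq_real, real_inner_smul_right, norm_smul, Real.norm_eq_abs, mul_pow, sq_abs]
  have e2 : ‖u + d‖^2 = ‖u‖^2 + 2*⟪u,d⟫ + ‖d‖^2 := norm_add_sq_real u d
  rw [e1, e2]; ring
set_option maxHeartbeats 1600000

/-- **Primal gap bounded by the dual gap.** With the primal–dual pair
`Φ_λ(u) = ω(Au) + (1/(2λ))‖u − y‖²`,
`Ψ_λ(v) = (1/(2λ))‖λAᵀv − y‖² + ω*(v) − (1/(2λ))‖y‖²`, `ω` globally
`K_ω`-Lipschitz, `v̄` minimizing `Ψ_λ`, `z̄ = y − λAᵀv̄`, `z = y − λAᵀv`, and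
`Δ = Ψ_λ(v) − Ψ_λ(v̄)` (a finite dual gap):
`Φ_λ(z) − Φ_λ(z̄) ≤ √Δ (2√(2λ) K_ω ‖A‖ + √Δ)`. -/
theorem stmt17 {n m : ℕ} (y : EuclideanSpace ℝ (Fin n)) (lam : ℝ) (hlam : 0 < lam)
    (A : EuclideanSpace ℝ (Fin n) →L[ℝ] EuclideanSpace ℝ (Fin m))
    (omega : EuclideanSpace ℝ (Fin m) → ℝ)
    (homega_conv : ConvexOn ℝ Set.univ omega)
    (homega_lsc : LowerSemicontinuous omega)
    (K : ℝ) (hK : 0 ≤ K)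
    (hlip : ∀ a b, |omega a - omega b| ≤ K * ‖a - b‖)
    (Phi : EuclideanSpace ℝ (Fin n) → ℝ)
    (hPhi : Phi = fun u => omega (A u) + 1 / (2 * lam) * ‖u - y‖ ^ 2)
    (Psi : EuclideanSpace ℝ (Fin m) → EReal)
    (hPsi : Psi = fun v =>
      ((1 / (2 * lam) * ‖lam • (ContinuousLinearMap.adjoint A) v - y‖ ^ 2
          - 1 / (2 * lam) * ‖y‖ ^ 2 : ℝ) : EReal)
        + fenchelConj (fun z => ((omega z : ℝ) : EReal)) v)
    (vb : EuclideanSpace ℝ (Fin m)) (hmin : ∀ v, Psi vb ≤ Psi v)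
    (v : EuclideanSpace ℝ (Fin m)) (Δ : ℝ)
    (hΔ : Psi vb + (Δ : EReal) = Psi v) :
    Phi (y - lam • (ContinuousLinearMap.adjoint A) v)
        - Phi (y - lam • (ContinuousLinearMap.adjoint A) vb)
      ≤ Real.sqrt Δ * (2 * Real.sqrt (2 * lam) * K * ‖A‖ + Real.sqrt Δ) := by
  set B := ContinuousLinearMap.adjoint A with hB
  set f := fenchelConj (fun z => ((omega z : ℝ) : EReal)) with hfdef
  have hPsiq : ∀ w, Psi w =
      ((1 / (2 * lam) * ‖lam • B w - y‖ ^ 2 - 1 / (2 * lam) * ‖y‖ ^ 2 : ℝ) : EReal) + f w :=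
    fun w => by rw [hPsi]
  -- continuity of omega
  have hcont : Continuous omega := by
    have hl : LipschitzWith (Real.toNNReal K) omega := by
      apply LipschitzWith.of_dist_le_mul
      intro a b
      rw [Real.coe_toNNReal K hK, dist_eq_norm, dist_eq_norm]
      exact hlip a b
    exact hl.continuous
  -- affine minorant gives finiteness of the minimum
  obtain ⟨g, c, hgc⟩ := affine_minorant omega homega_conv hcont
  have hfg : f g ≤ (c : EReal) :=
    (fenchelConj_le_iff omega g c).2 fun x => EReal.coe_le_coe_iff.2 (hgc x)
  have hPsivb_lt : Psi vb < ⊤ := by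
    refine lt_of_le_of_lt ((hmin g).trans ?_) (EReal.coe_lt_top
      ((1 / (2 * lam) * ‖lam • B g - y‖ ^ 2 - 1 / (2 * lam) * ‖y‖ ^ 2) + c))
    rw [hPsiq g, EReal.coe_add]
    exact add_le_add_right hfg _
  have hfvb_top : f vb ≠ ⊤ := by
    intro h
    rw [hPsiq vb, h, EReal.coe_add_top] at hPsivb_lt
    exact lt_irrefl _ hPsivb_lt
  have hfvb_bot : f vb ≠ ⊥ := fenchelConj_ne_bot omega vb
  set a := (f vb).toReal with ha
  have hfa : f vb = (a : EReal) := (EReal.coe_toReal hfvb_top hfvb_bot).symm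
  set qvb : ℝ := 1 / (2 * lam) * ‖lam • B vb - y‖ ^ 2 - 1 / (2 * lam) * ‖y‖ ^ 2 with hqvb
  set qv : ℝ := 1 / (2 * lam) * ‖lam • B v - y‖ ^ 2 - 1 / (2 * lam) * ‖y‖ ^ 2 with hqv
  have hPsivb : Psi vb = ((qvb + a : ℝ) : EReal) := by
    rw [hPsiq vb, hfa, EReal.coe_add]
  have hPsiv : Psi v = ((qvb + a + Δ : ℝ) : EReal) := by
    rw [← hΔ, hPsivb, ← EReal.coe_add]
  have hfv_top : f v ≠ ⊤ := by
    intro h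
    rw [hPsiq v, h, EReal.coe_add_top] at hPsiv
    exact (EReal.coe_ne_top _) hPsiv.symm
  have hfv_bot : f v ≠ ⊥ := fenchelConj_ne_bot omega v
  set b := (f v).toReal with hb
  have hfb : f v = (b : EReal) := (EReal.coe_toReal hfv_top hfv_bot).symm
  have hqb : qv + b = qvb + a + Δ := by
    have h1 : ((qv + b : ℝ) : EReal) = ((qvb + a + Δ : ℝ) : EReal) := by
      rw [← hPsiv, hPsiq v, hfb, EReal.coe_add]
    exact_mod_cast h1
  have hΔ0 : 0 ≤ Δ := by
    have h1 := hmin v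
    rw [hPsivb, hPsiv] at h1
    have h2 := EReal.coe_le_coe_iff.1 h1
    linarith
  -- strong convexity estimate
  set D : EuclideanSpace ℝ (Fin n) := lam • B v - lam • B vb with hD
  have key : ∀ t : ℝ, 0 < t → t < 1 →
      (1 - t) * (1 / (2 * lam) * ‖D‖ ^ 2) ≤ Δ := by
    intro t ht0 ht1
    set w := vb + t • (v - vb) with hw
    have hmidf : f w ≤ (((1 - t) * a + t * b : ℝ) : EReal) := by
      rw [hfdef, fenchelConj_le_iff]
      intro x
      apply EReal.coe_le_coe_iff.2
      have hax : ⟪vb, x⟫ - omega x ≤ a :=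
        EReal.coe_le_coe_iff.1 ((le_fenchelConj omega vb x).trans_eq hfa)
      have hbx : ⟪v, x⟫ - omega x ≤ b :=
        EReal.coe_le_coe_iff.1 ((le_fenchelConj omega v x).trans_eq hfb)
      have hwx : ⟪w, x⟫ = (1 - t) * ⟪vb, x⟫ + t * ⟪v, x⟫ := by
        rw [hw]
        simp only [inner_add_left, real_inner_smul_left, inner_sub_left]
        ring
      nlinarith [mul_le_mul_of_nonneg_left hax (by linarith : (0:ℝ) ≤ 1 - t),
        mul_le_mul_of_nonneg_left hbx ht0.le]
    have harg : lam • B w - y = (lam • B vb - y) + t • D := by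
      rw [hw, hD, map_add, map_smul, map_sub]
      simp only [smul_add, smul_sub, smul_comm lam t]
      abel
    have harg2 : lam • B v - y = (lam • B vb - y) + D := by
      rw [hD]; abel
    have hqw : 1 / (2 * lam) * ‖lam • B w - y‖ ^ 2 - 1 / (2 * lam) * ‖y‖ ^ 2
        = (1 - t) * qvb + t * qv - 1 / (2 * lam) * (t * (1 - t) * ‖D‖ ^ 2) := by
      rw [harg, quad_interp, hqvb, hqv, harg2]
      ring
    have h1 : Psi vb ≤ (((1 / (2 * lam) * ‖lam • B w - y‖ ^ 2 - 1 / (2 * lam) * ‖y‖ ^ 2)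
        + ((1 - t) * a + t * b) : ℝ) : EReal) := by
      refine (hmin w).trans ?_
      rw [hPsiq w, EReal.coe_add]
      exact add_le_add_right hmidf _
    rw [hPsivb] at h1
    have h2 := EReal.coe_le_coe_iff.1 h1
    rw [hqw] at h2
    -- h2 : qvb + a ≤ (1-t)qvb + t qv - C t(1-t)s + (1-t)a + t b
    clear_value a qvb qv b D
    have ht2 : t * (qv + b) = t * (qvb + a + Δ) := by rw [hqb]
    have h3 : t * ((1 - t) * (1 / (2 * lam) * ‖D‖ ^ 2)) ≤ t * Δ := by nlinarith [h2, ht2]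
    exact le_of_mul_le_mul_left h3 ht0
  have hlim : 1 / (2 * lam) * ‖D‖ ^ 2 ≤ Δ := by
    by_contra hcon
    push_neg at hcon
    set c0 : ℝ := 1 / (2 * lam) * ‖D‖ ^ 2 with hc0def
    have hc0 : 0 < c0 := lt_of_le_of_lt hΔ0 hcon
    set t : ℝ := (c0 - Δ) / (2 * c0) with htdef
    have ht0 : 0 < t := by apply div_pos; linarith; linarith
    have ht1 : t < 1 := by
      rw [htdef, div_lt_one (by linarith)]
      linarith
    have h4 := key t ht0 ht1
    have ht' : t * c0 = (c0 - Δ) / 2 := by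
      rw [htdef]; field_simp
    nlinarith
  -- norm bounds
  have hvbK : ‖vb‖ ≤ K := norm_le_of_fenchelConj_ne_top omega K hK hlip vb hfvb_top
  have hBnorm : ‖B‖ = ‖A‖ := LinearIsometryEquiv.norm_map ContinuousLinearMap.adjoint A
  have hBvb : ‖B vb‖ ≤ ‖A‖ * K := by
    calc ‖B vb‖ ≤ ‖B‖ * ‖vb‖ := B.le_opNorm vb
      _ ≤ ‖A‖ * K := by rw [hBnorm]; exact mul_le_mul_of_nonneg_left hvbK (norm_nonneg A)
  set z : EuclideanSpace ℝ (Fin n) := y - lam • B v with hz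
  set zb : EuclideanSpace ℝ (Fin n) := y - lam • B vb with hzb
  have hzz : z - zb = -D := by rw [hz, hzb, hD]; abel
  have hnd : ‖z - zb‖ = ‖D‖ := by rw [hzz, norm_neg]
  have hzby : ‖zb - y‖ ≤ lam * (‖A‖ * K) := by
    have : zb - y = -(lam • B vb) := by rw [hzb]; abel
    rw [this, norm_neg, norm_smul, Real.norm_eq_abs, abs_of_pos hlam]
    exact mul_le_mul_of_nonneg_left hBvb hlam.le
  have hzy : ‖z - y‖ ≤ ‖D‖ + ‖zb - y‖ := by
    have h10 := dist_triangle z zb y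
    rw [dist_eq_norm, dist_eq_norm, dist_eq_norm] at h10
    rw [← hnd]
    linarith
  have hlipz : omega (A z) - omega (A zb) ≤ K * (‖A‖ * ‖D‖) := by
    have h5 := (abs_le.1 (hlip (A z) (A zb))).2
    have h6 : ‖A z - A zb‖ ≤ ‖A‖ * ‖D‖ := by
      rw [← map_sub]
      calc ‖A (z - zb)‖ ≤ ‖A‖ * ‖z - zb‖ := A.le_opNorm _
        _ = ‖A‖ * ‖D‖ := by rw [hnd]
    calc omega (A z) - omega (A zb) ≤ K * ‖A z - A zb‖ := h5
      _ ≤ K * (‖A‖ * ‖D‖) := mul_le_mul_of_nonneg_left h6 hK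
  -- sqrt facts
  have hs2 : Real.sqrt Δ * Real.sqrt Δ = Δ := Real.mul_self_sqrt hΔ0
  have hd2 : ‖D‖ ^ 2 ≤ 2 * lam * Δ := by
    calc ‖D‖ ^ 2 = 2 * lam * (1 / (2 * lam) * ‖D‖ ^ 2) := by field_simp
      _ ≤ 2 * lam * Δ := mul_le_mul_of_nonneg_left hlim (by positivity)
  have hdle : ‖D‖ ≤ Real.sqrt (2 * lam) * Real.sqrt Δ := by
    rw [← Real.sqrt_mul (by positivity : (0:ℝ) ≤ 2 * lam)]
    exact Real.le_sqrt_of_sq_le hd2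
  have hKA : (0:ℝ) ≤ K * ‖A‖ := mul_nonneg hK (norm_nonneg A)
  have hsq : ‖z - y‖ ^ 2 - ‖zb - y‖ ^ 2 ≤ ‖D‖ ^ 2 + 2 * ‖D‖ * (lam * (‖A‖ * K)) := by
    nlinarith [norm_nonneg (z - y), norm_nonneg (zb - y), norm_nonneg D, hzy, hzby]
  rw [hPhi]
  simp only
  have h8 : 0 < 1 / (2 * lam) := by positivity
  have h9 : 1 / (2 * lam) * (2 * lam) = 1 := by field_simp
  have hsd : 0 ≤ Real.sqrt (2 * lam) * Real.sqrt Δ := by positivity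
  nlinarith [mul_le_mul_of_nonneg_left hdle (by linarith : (0:ℝ) ≤ 2 * (K * ‖A‖)),
    mul_le_mul_of_nonneg_left hd2 h8.le, hsq, hlipz,
    mul_le_mul_of_nonneg_left hsq h8.le]
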